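/- arXiv:2411.04791 — 2 statements merged into one kernel-verified Lean document; each statement's English description precedes it below -/
import Mathlib

section
/- Let K > 0 and let ρ̄ᴴ : ℝ² → ℝ. Suppose ρᴴ : ℝ² × ℝ → ℝ and u : ℝ² × ℝ → ℝ² are such that for every t ≥ 0 the map x ↦ ρᴴ(x,t)u(x,t) is differentiable, for every x the map t ↦ ρᴴ(x,t) is differentiable, and the continuity equation ∂ₜρᴴ(x,t) + div_x(ρᴴ(·,t)u(·,t))(x) = 0 holds together with the control condition div_x(ρᴴ(·,t)u(·,t))(x) = -K·(ρ̄ᴴ(x) - ρᴴ(x,t)) for all x ∈ ℝ² and t ≥ 0. Then the herders' density error eᴴ(x,t) = ρ̄ᴴ(x) - ρᴴ(x,t) satisfies eᴴ(x,t) = eᴴ(x,0)·exp(-K t) for all x ∈ ℝ² and t ≥ 0; in particular eᴴ(x,t) → 0 as t → ∞ for every x. -/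
open MeasureTheory Real Filter

noncomputable section

/-- The plane `ℝ²`, modeled as functions `Fin 2 → ℝ`. -/
abbrev Vec2 := Fin 2 → ℝ

/-- Partial derivative of a scalar field in the `i`-th coordinate direction. -/
def pderiv2 (i : Fin 2) (f : Vec2 → ℝ) (x : Vec2) : ℝ :=
  fderiv ℝ f x (Pi.single i 1)

/-- Divergence of a vector field on `ℝ²` (trace of the Fréchet derivative). -/
def div2 (F : Vec2 → Vec2) (x : Vec2) : ℝ :=
  ∑ i, fderiv ℝ F x (Pi.single i 1) i

/-- Gradient of a scalar field on `ℝ²`. -/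
def grad2 (f : Vec2 → ℝ) (x : Vec2) : Vec2 :=
  fun i => pderiv2 i f x

/-- Laplacian of a scalar field on `ℝ²`. -/
def lap2 (f : Vec2 → ℝ) (x : Vec2) : ℝ :=
  ∑ i, pderiv2 i (pderiv2 i f) x

/-- `2π`-periodicity in both coordinates: `g (x + 2πk) = g x` for all `k ∈ ℤ²`. -/
def Per2 {E : Type*} (g : Vec2 → E) : Prop :=
  ∀ (x : Vec2) (k : Fin 2 → ℤ), g (x + fun i => 2 * π * (k i : ℝ)) = g x

/-- The periodic square `Ω = [-π, π]²`. -/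
def Omega2 : Set Vec2 := Set.Icc (fun _ => -π) (fun _ => π)

/-!
Substituting the control law into the continuity equation gives `∂ₜ eᴴ = -K eᴴ` at every point
`x`, a scalar linear ODE in `t` whose solution is `eᴴ(x, 0) e^{-Kt}`.
-/

/-- The integrating factor `exp (-c t)` turns `f' = c f` into `(exp (-c t) • f t)' = 0`. -/
theorem eq_exp_smul_of_hasDerivAt_eq_smul {E : Type*} [NormedAddCommGroup E] [NormedSpace ℝ E]
    {c : ℝ} {f : ℝ → E}
    (hf : ∀ t, 0 ≤ t → HasDerivAt f (c • f t) t) {t : ℝ} (ht : 0 ≤ t) :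
    f t = Real.exp (c * t) • f 0 := by
  set g : ℝ → E := fun s => Real.exp (-c * s) • f s with hg
  have hg_deriv : ∀ s, 0 ≤ s → HasDerivAt g 0 s := by
    intro s hs
    have hexp : HasDerivAt (fun s => Real.exp (-c * s)) (Real.exp (-c * s) * -c) s := by
      simpa using ((hasDerivAt_id s).const_mul (-c)).exp
    refine (hexp.smul (hf s hs)).congr_deriv ?_
    rw [smul_smul, ← add_smul, mul_neg, add_neg_cancel, zero_smul]
  have hg_const : g t = g 0 :=
    constant_of_has_deriv_right_zero
      (fun s hs => (hg_deriv s hs.1).continuousAt.continuousWithinAt)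
      (fun s hs => (hg_deriv s hs.1).hasDerivWithinAt) t ⟨ht, le_rfl⟩
  simp only [hg, mul_zero, Real.exp_zero, one_smul] at hg_const
  rw [← hg_const, smul_smul, ← Real.exp_add, neg_mul, add_neg_cancel, Real.exp_zero, one_smul]

theorem tendsto_mul_exp_neg_mul_atTop_nhds_zero {K : ℝ} (hK : 0 < K) (a : ℝ) :
    Tendsto (fun t => a * Real.exp (-K * t)) atTop (nhds 0) := by
  have hexp : Tendsto (fun t => Real.exp (-K * t)) atTop (nhds 0) :=
    Real.tendsto_exp_comp_nhds_zero.2 <|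
      tendsto_id.const_mul_atTop_of_neg (neg_lt_zero.2 hK)
  simpa using hexp.const_mul a

theorem herders_global_exponential_convergence_general
    (K : ℝ) (hK : 0 < K) (ρbar : Vec2 → ℝ)
    (ρ : Vec2 → ℝ → ℝ) (u : Vec2 → ℝ → Vec2)
    (hρt : ∀ x : Vec2, Differentiable ℝ (ρ x))
    (hcont : ∀ (x : Vec2) (t : ℝ), 0 ≤ t →
      deriv (ρ x) t + div2 (fun y => ρ y t • u y t) x = 0)
    (hctrl : ∀ (x : Vec2) (t : ℝ), 0 ≤ t →
      div2 (fun y => ρ y t • u y t) x = -K * (ρbar x - ρ x t)) :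
    (∀ (x : Vec2) (t : ℝ), 0 ≤ t →
      ρbar x - ρ x t = (ρbar x - ρ x 0) * Real.exp (-K * t)) ∧
    (∀ x : Vec2, Tendsto (fun t => ρbar x - ρ x t) atTop (nhds 0)) := by
  have herror : ∀ x t, 0 ≤ t →
      HasDerivAt (fun s => ρbar x - ρ x s) (-K • (ρbar x - ρ x t)) t := by
    intro x t ht
    have hρ' : deriv (ρ x) t = K * (ρbar x - ρ x t) := by
      linarith [hcont x t ht, hctrl x t ht]
    refine ((hasDerivAt_const t (ρbar x)).sub (hρt x t).hasDerivAt).congr_deriv ?_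
    rw [hρ', smul_eq_mul]
    ring
  have hdecay : ∀ x t, 0 ≤ t → ρbar x - ρ x t = (ρbar x - ρ x 0) * Real.exp (-K * t) :=
    fun x t ht => (eq_exp_smul_of_hasDerivAt_eq_smul (herror x) ht).trans (mul_comm _ _)
  refine ⟨hdecay, fun x => ?_⟩
  refine (tendsto_mul_exp_neg_mul_atTop_nhds_zero hK (ρbar x - ρ x 0)).congr' ?_
  filter_upwards [eventually_ge_atTop 0] with t ht
  exact (hdecay x t ht).symm

/-- Herders' global exponential convergence.
Under the continuity equation together with the control condition
`∇·(ρᴴu) = -K (ρ̄ᴴ - ρᴴ)`, the herders' density error `eᴴ(x,t) = ρ̄ᴴ(x) - ρᴴ(x,t)`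
satisfies `eᴴ(x,t) = eᴴ(x,0) e^{-Kt}` for `t ≥ 0`, and hence tends to `0` pointwise. -/
theorem herders_global_exponential_convergence
    (K : ℝ) (hK : 0 < K) (ρbar : Vec2 → ℝ)
    (ρ : Vec2 → ℝ → ℝ) (u : Vec2 → ℝ → Vec2)
    (hflux : ∀ t : ℝ, 0 ≤ t → Differentiable ℝ (fun x => ρ x t • u x t))
    (hρt : ∀ x : Vec2, Differentiable ℝ (ρ x))
    (hcont : ∀ (x : Vec2) (t : ℝ), 0 ≤ t →
      deriv (ρ x) t + div2 (fun y => ρ y t • u y t) x = 0)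
    (hctrl : ∀ (x : Vec2) (t : ℝ), 0 ≤ t →
      div2 (fun y => ρ y t • u y t) x = -K * (ρbar x - ρ x t)) :
    (∀ (x : Vec2) (t : ℝ), 0 ≤ t →
      ρbar x - ρ x t = (ρbar x - ρ x 0) * Real.exp (-K * t)) ∧
    (∀ x : Vec2, Tendsto (fun t => ρbar x - ρ x t) atTop (nhds 0)) :=
  herders_global_exponential_convergence_general K hK ρbar ρ u hρt hcont hctrl
end
end

section
/- Let Ω = [-π,π]² ⊂ ℝ². Let e : ℝ² → ℝ be continuously differentiable and 2π-periodic with zero mean, i.e. ∫_Ω e(x) dx = 0. Then ∫_Ω ‖∇e(x)‖² dx ≥ ∫_Ω e(x)² dx. -/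
open MeasureTheory Real Filter

noncomputable section

/-! In one variable this is Wirtinger's inequality: when `f a = f b`, integration by parts turns
the `n`-th Fourier coefficient of `f` on `[a, b]` into `(b - a) / (2πin)` times that of `f'`, so by
Parseval every mode but the mean is controlled by `f'`. On the square, apply it in `t` to each
slice `e(s, ·)`, at the cost of the square of the slice integral `I(s) = ∫ e(s, t) dt`; then apply
it in `s` to `I`, whose mean is zero, and bound `I'(s)² ≤ 2π ∫ ∂ₛe(s, t)² dt` by Cauchy–Schwarz,
which is Parseval keeping only the zero mode. -/

open Complex Set
open scoped Interval

theorem fourierCoeffOn_zero {E : Type*} [NormedAddCommGroup E] [NormedSpace ℂ E] {a b : ℝ}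
    (hab : a < b) (f : ℝ → E) : fourierCoeffOn hab f 0 = (b - a)⁻¹ • ∫ x in a..b, f x := by
  simp [fourierCoeffOn_eq_integral]

theorem norm_fourierCoeffOn_le_of_hasDerivAt {a b : ℝ} (hab : a < b) {f f' : ℝ → ℂ} {n : ℤ}
    (hn : n ≠ 0) (hf : ∀ x ∈ [[a, b]], HasDerivAt f (f' x) x)
    (hf' : IntervalIntegrable f' volume a b) (hfab : f a = f b) :
    ‖fourierCoeffOn hab f n‖ ≤ (b - a) / (2 * π) * ‖fourierCoeffOn hab f' n‖ := by
  have hn' : |(n : ℝ)|⁻¹ ≤ 1 := inv_le_one_of_one_le₀ (by exact_mod_cast Int.one_le_abs hn)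
  have hc : 0 ≤ (b - a) / (2 * π) * ‖fourierCoeffOn hab f' n‖ :=
    mul_nonneg (div_nonneg (sub_nonneg.2 hab.le) two_pi_pos.le) (norm_nonneg _)
  rw [fourierCoeffOn_of_hasDerivAt hab hn hf hf', hfab, sub_self, mul_zero, zero_sub]
  simp only [norm_mul, norm_neg, norm_div, norm_one, ← ofReal_sub, norm_real, norm_intCast,
    Complex.norm_I, Complex.norm_ofNat, norm_of_nonneg (sub_nonneg.2 hab.le),
    norm_of_nonneg pi_pos.le]
  calc _ = |(n : ℝ)|⁻¹ * ((b - a) / (2 * π) * ‖fourierCoeffOn hab f' n‖) := by ring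
    _ ≤ _ := mul_le_of_le_one_left hc hn'

theorem ContinuousOn.memLp_two_restrict_Ioc {E : Type*} [NormedAddCommGroup E] {a b : ℝ}
    (hab : a ≤ b) {g : ℝ → E} (hg : ContinuousOn g [[a, b]]) :
    MemLp g 2 (volume.restrict (Ioc a b)) := by
  have hsub : Ioc a b ⊆ [[a, b]] := Ioc_subset_Icc_self.trans Icc_subset_uIcc
  refine (memLp_two_iff_integrable_sq_norm
    ((hg.mono hsub).aestronglyMeasurable measurableSet_Ioc)).2 ?_
  exact (intervalIntegrable_iff_integrableOn_Ioc_of_le hab).1 (hg.norm.pow 2).intervalIntegrable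

theorem integral_norm_sq_le_of_hasDerivAt {a b : ℝ} (hab : a < b) {f f' : ℝ → ℂ}
    (hf : ∀ x ∈ [[a, b]], HasDerivAt f (f' x) x) (hf' : ContinuousOn f' [[a, b]])
    (hfab : f a = f b) :
    ∫ x in a..b, ‖f x‖ ^ 2 ≤
      ‖∫ x in a..b, f x‖ ^ 2 / (b - a) + ((b - a) / (2 * π)) ^ 2 * ∫ x in a..b, ‖f' x‖ ^ 2 := by
  have hfc : ContinuousOn f [[a, b]] := fun x hx => (hf x hx).continuousAt.continuousWithinAt
  have hparseval := hasSum_sq_fourierCoeffOn hab (hfc.memLp_two_restrict_Ioc hab.le)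
  have hparseval' := (hasSum_sq_fourierCoeffOn hab (hf'.memLp_two_restrict_Ioc hab.le)).mul_left
    (((b - a) / (2 * π)) ^ 2)
  have hle := hasSum_le (fun n => ?_) hparseval
    ((hasSum_ite_eq (0 : ℤ) (‖fourierCoeffOn hab f 0‖ ^ 2)).add hparseval')
  · have hba : 0 < b - a := sub_pos.2 hab
    rw [fourierCoeffOn_zero, norm_smul, norm_inv, norm_of_nonneg hba.le, smul_eq_mul,
      smul_eq_mul] at hle
    field_simp at hle ⊢
    linarith
  · rcases eq_or_ne n 0 with rfl | hn
    · rw [if_pos rfl]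
      exact le_add_of_nonneg_right (by positivity)
    · rw [if_neg hn, zero_add, ← mul_pow]
      exact pow_le_pow_left₀ (norm_nonneg _) (norm_fourierCoeffOn_le_of_hasDerivAt hab hn hf
        hf'.intervalIntegrable hfab) 2

theorem norm_integral_sq_div_le {a b : ℝ} (hab : a < b) {f : ℝ → ℂ}
    (hf : ContinuousOn f [[a, b]]) :
    ‖∫ x in a..b, f x‖ ^ 2 / (b - a) ≤ ∫ x in a..b, ‖f x‖ ^ 2 := by
  have hba : 0 < b - a := sub_pos.2 hab
  have hle := le_hasSum (hasSum_sq_fourierCoeffOn hab (hf.memLp_two_restrict_Ioc hab.le)) 0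
    (fun _ _ => by positivity)
  rw [fourierCoeffOn_zero, norm_smul, norm_inv, norm_of_nonneg hba.le, smul_eq_mul] at hle
  field_simp at hle ⊢
  linarith

theorem integral_sq_le_of_hasDerivAt {a b : ℝ} (hab : a < b) {f f' : ℝ → ℝ}
    (hf : ∀ x ∈ [[a, b]], HasDerivAt f (f' x) x) (hf' : ContinuousOn f' [[a, b]])
    (hfab : f a = f b) :
    ∫ x in a..b, f x ^ 2 ≤
      (∫ x in a..b, f x) ^ 2 / (b - a) + ((b - a) / (2 * π)) ^ 2 * ∫ x in a..b, f' x ^ 2 := by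
  simpa [intervalIntegral.integral_ofReal] using integral_norm_sq_le_of_hasDerivAt hab
    (fun x hx => (hf x hx).ofReal_comp) (continuous_ofReal.comp_continuousOn hf')
    (congrArg ofReal hfab)

theorem integral_sq_div_le {a b : ℝ} (hab : a < b) {f : ℝ → ℝ} (hf : ContinuousOn f [[a, b]]) :
    (∫ x in a..b, f x) ^ 2 / (b - a) ≤ ∫ x in a..b, f x ^ 2 := by
  simpa [intervalIntegral.integral_ofReal] using
    norm_integral_sq_div_le hab (continuous_ofReal.comp_continuousOn hf)

theorem hasDerivAt_vecCons_fst {e : Vec2 → ℝ} {s t : ℝ} (he : DifferentiableAt ℝ e ![s, t]) :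
    HasDerivAt (fun s' => e ![s', t]) (pderiv2 0 e ![s, t]) s := by
  have hline : HasDerivAt (fun s' : ℝ => (![s', t] : Vec2)) (Pi.single 0 1) s := by
    rw [hasDerivAt_pi]
    intro i
    fin_cases i
    · simpa using hasDerivAt_id' s
    · simpa using hasDerivAt_const s t
  exact he.hasFDerivAt.comp_hasDerivAt s hline

theorem hasDerivAt_vecCons_snd {e : Vec2 → ℝ} {s t : ℝ} (he : DifferentiableAt ℝ e ![s, t]) :
    HasDerivAt (fun t' => e ![s, t']) (pderiv2 1 e ![s, t]) t := by
  have hline : HasDerivAt (fun t' : ℝ => (![s, t'] : Vec2)) (Pi.single 1 1) t := by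
    rw [hasDerivAt_pi]
    intro i
    fin_cases i
    · simpa using hasDerivAt_const t s
    · simpa using hasDerivAt_id' t
  exact he.hasFDerivAt.comp_hasDerivAt t hline

theorem ContDiff.continuous_pderiv2 {e : Vec2 → ℝ} (he : ContDiff ℝ 1 e) (i : Fin 2) :
    Continuous (pderiv2 i e) :=
  (he.continuous_fderiv one_ne_zero).clm_apply continuous_const

theorem Per2.apply_vecCons_neg_pi_fst {E : Type*} {g : Vec2 → E} (hg : Per2 g) (t : ℝ) :
    g ![-π, t] = g ![π, t] := by
  convert (hg ![-π, t] ![1, 0]).symm using 2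
  ext i; fin_cases i <;> simp; ring

theorem Per2.apply_vecCons_neg_pi_snd {E : Type*} {g : Vec2 → E} (hg : Per2 g) (s : ℝ) :
    g ![s, -π] = g ![s, π] := by
  convert (hg ![s, -π] ![0, 1]).symm using 2
  ext i; fin_cases i <;> simp; ring

theorem setIntegral_Icc_eq_intervalIntegral_vecCons {h : Vec2 → ℝ} (hh : Continuous h)
    {p q : Vec2} (hpq : p ≤ q) :
    ∫ v in Icc p q, h v = ∫ s in p 0..q 0, ∫ t in p 1..q 1, h ![s, t] := by
  have hpre : MeasurableEquiv.finTwoArrow.symm ⁻¹' Icc p q =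
      Icc (p 0) (q 0) ×ˢ Icc (p 1) (q 1) := by
    ext ⟨s, t⟩
    simp [Pi.le_def, Fin.forall_fin_two, and_and_and_comm]
  rw [← ((volume_preserving_finTwoArrow ℝ).symm _).setIntegral_preimage_emb
    (MeasurableEquiv.measurableEmbedding _), hpre, Measure.volume_eq_prod]
  change ∫ x : ℝ × ℝ in _, h ![x.1, x.2] ∂_ = _
  rw [setIntegral_prod (fun x : ℝ × ℝ => h ![x.1, x.2])
      ((by fun_prop : Continuous fun x : ℝ × ℝ => h ![x.1, x.2]).continuousOn.integrableOn_compact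
        (isCompact_Icc.prod isCompact_Icc)),
    intervalIntegral.integral_of_le (hpq 0), ← integral_Icc_eq_integral_Ioc]
  refine setIntegral_congr_fun measurableSet_Icc fun s _ => ?_
  rw [intervalIntegral.integral_of_le (hpq 1), ← integral_Icc_eq_integral_Ioc]

theorem continuous_intervalIntegral_vecCons {h : Vec2 → ℝ} (hh : Continuous h) (a b : ℝ) :
    Continuous fun s => ∫ t in a..b, h ![s, t] :=
  intervalIntegral.continuous_parametric_intervalIntegral_of_continuous'
    (f := fun s t => h ![s, t]) (by fun_prop) a b

theorem hasDerivAt_intervalIntegral_vecCons {e : Vec2 → ℝ} (he : ContDiff ℝ 1 e) (a b s₀ : ℝ) :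
    HasDerivAt (fun s => ∫ t in a..b, e ![s, t]) (∫ t in a..b, pderiv2 0 e ![s₀, t]) s₀ := by
  have hd := he.continuous_pderiv2 0
  obtain ⟨C, hC⟩ := (isCompact_Icc.prod isCompact_uIcc :
      IsCompact (Icc (s₀ - 1) (s₀ + 1) ×ˢ [[a, b]])).exists_bound_of_continuousOn
    (by fun_prop : Continuous fun p : ℝ × ℝ => pderiv2 0 e ![p.1, p.2]).continuousOn
  refine (intervalIntegral.hasDerivAt_integral_of_dominated_loc_of_deriv_le (bound := fun _ => C)
    (Icc_mem_nhds (by linarith) (by linarith))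
    (Eventually.of_forall fun s =>
      (by fun_prop : Continuous fun t => e ![s, t]).aestronglyMeasurable)
    ((by fun_prop : Continuous fun t => e ![s₀, t]).intervalIntegrable _ _)
    (by fun_prop : Continuous fun t => pderiv2 0 e ![s₀, t]).aestronglyMeasurable
    (ae_of_all _ fun t ht s hs => hC (s, t) ⟨hs, uIoc_subset_uIcc ht⟩)
    intervalIntegrable_const
    (ae_of_all _ fun t _ s _ => hasDerivAt_vecCons_fst (he.differentiable one_ne_zero _))).2

theorem integral_sq_slice_le {e : Vec2 → ℝ} (he : ContDiff ℝ 1 e) {s : ℝ}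
    (hs : e ![s, -π] = e ![s, π]) :
    ∫ t in (-π)..π, e ![s, t] ^ 2 ≤
      (∫ t in (-π)..π, e ![s, t]) ^ 2 / (2 * π) + ∫ t in (-π)..π, pderiv2 1 e ![s, t] ^ 2 := by
  have hd := he.continuous_pderiv2 1
  have h := integral_sq_le_of_hasDerivAt (by linarith [pi_pos] : -π < π)
    (fun t _ => hasDerivAt_vecCons_snd (he.differentiable one_ne_zero _))
    (by fun_prop : Continuous fun t => pderiv2 1 e ![s, t]).continuousOn hs
  rwa [show π - -π = 2 * π by ring, div_self two_pi_pos.ne', one_pow, one_mul] at h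

theorem setIntegral_Omega2_sq_le {e : Vec2 → ℝ} (he : ContDiff ℝ 1 e)
    (hper : ∀ s, e ![s, -π] = e ![s, π]) :
    ∫ x in Omega2, e x ^ 2 ≤
      (∫ s in (-π)..π, (∫ t in (-π)..π, e ![s, t]) ^ 2 / (2 * π)) +
        ∫ x in Omega2, pderiv2 1 e x ^ 2 := by
  have hπ : -π ≤ π := by linarith [pi_pos]
  have hd := he.continuous_pderiv2 1
  have hsq : Continuous fun x => pderiv2 1 e x ^ 2 := by fun_prop
  have hsq_e : Continuous fun x => e x ^ 2 := by fun_prop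
  rw [Omega2, setIntegral_Icc_eq_intervalIntegral_vecCons hsq_e fun _ => hπ,
    setIntegral_Icc_eq_intervalIntegral_vecCons hsq fun _ => hπ,
    ← intervalIntegral.integral_add]
  · exact intervalIntegral.integral_mono_on hπ
      ((continuous_intervalIntegral_vecCons hsq_e _ _).intervalIntegrable _ _)
      ((((continuous_intervalIntegral_vecCons he.continuous _ _).pow 2).div_const _).add
        (continuous_intervalIntegral_vecCons hsq _ _) |>.intervalIntegrable _ _)
      fun s _ => integral_sq_slice_le he (hper s)
  · exact ((continuous_intervalIntegral_vecCons he.continuous _ _).pow 2).div_const _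
      |>.intervalIntegrable _ _
  · exact (continuous_intervalIntegral_vecCons hsq _ _).intervalIntegrable _ _

theorem integral_sq_integral_slice_div_le {e : Vec2 → ℝ} (he : ContDiff ℝ 1 e)
    (hper : ∀ t, e ![-π, t] = e ![π, t]) (hmean : ∫ x in Omega2, e x = 0) :
    ∫ s in (-π)..π, (∫ t in (-π)..π, e ![s, t]) ^ 2 / (2 * π) ≤
      ∫ x in Omega2, pderiv2 0 e x ^ 2 := by
  have hπ : -π < π := by linarith [pi_pos]
  have hlen : π - -π = 2 * π := by ring
  have hd := he.continuous_pderiv2 0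
  have hsq : Continuous fun x => pderiv2 0 e x ^ 2 := by fun_prop
  rw [Omega2, setIntegral_Icc_eq_intervalIntegral_vecCons he.continuous fun _ => hπ.le] at hmean
  rw [Omega2, setIntegral_Icc_eq_intervalIntegral_vecCons hsq fun _ => hπ.le]
  have hwirtinger := integral_sq_le_of_hasDerivAt hπ
    (fun s _ => hasDerivAt_intervalIntegral_vecCons he (-π) π s)
    (continuous_intervalIntegral_vecCons hd (-π) π).continuousOn
    (intervalIntegral.integral_congr fun t _ => hper t)
  rw [hmean, hlen, div_self two_pi_pos.ne', one_pow, one_mul] at hwirtinger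
  have hcs : ∀ s, (∫ t in (-π)..π, pderiv2 0 e ![s, t]) ^ 2 / (2 * π) ≤
      ∫ t in (-π)..π, pderiv2 0 e ![s, t] ^ 2 := fun s => by
    simpa [hlen] using integral_sq_div_le hπ
      (by fun_prop : Continuous fun t => pderiv2 0 e ![s, t]).continuousOn
  calc _ = (∫ s in (-π)..π, (∫ t in (-π)..π, e ![s, t]) ^ 2) / (2 * π) :=
        intervalIntegral.integral_div _ _
    _ ≤ (∫ s in (-π)..π, (∫ t in (-π)..π, pderiv2 0 e ![s, t]) ^ 2) / (2 * π) := by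
        gcongr
        simpa using hwirtinger
    _ = ∫ s in (-π)..π, (∫ t in (-π)..π, pderiv2 0 e ![s, t]) ^ 2 / (2 * π) :=
        (intervalIntegral.integral_div _ _).symm
    _ ≤ _ := intervalIntegral.integral_mono_on hπ.le
        (((continuous_intervalIntegral_vecCons hd _ _).pow 2).div_const _ |>.intervalIntegrable _ _)
        ((continuous_intervalIntegral_vecCons hsq _ _).intervalIntegrable _ _)
        fun s _ => hcs s

/-- Poincaré–Wirtinger inequality on the `2π`-periodic square.
For `e : ℝ² → ℝ` continuously differentiable, `2π`-periodic and with zero mean on `Ω`,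
`∫_Ω ‖∇e‖² ≥ ∫_Ω e²`. -/
theorem poincare_periodic_square
    (e : Vec2 → ℝ) (he : ContDiff ℝ 1 e) (hpe : Per2 e)
    (hmean : ∫ x in Omega2, e x = 0) :
    ∫ x in Omega2, (e x) ^ 2 ≤ ∫ x in Omega2, ∑ i, (pderiv2 i e x) ^ 2 := by
  have hd := he.continuous_pderiv2
  have hint : ∀ i, IntegrableOn (fun x => pderiv2 i e x ^ 2) Omega2 := fun i =>
    (by fun_prop : Continuous fun x => pderiv2 i e x ^ 2).continuousOn.integrableOn_compact
      isCompact_Icc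
  have hsplit : ∫ x in Omega2, ∑ i, pderiv2 i e x ^ 2 =
      (∫ x in Omega2, pderiv2 0 e x ^ 2) + ∫ x in Omega2, pderiv2 1 e x ^ 2 := by
    simp only [Fin.sum_univ_two]
    exact integral_add (hint 0) (hint 1)
  linarith [setIntegral_Omega2_sq_le he hpe.apply_vecCons_neg_pi_snd,
    integral_sq_integral_slice_div_le he hpe.apply_vecCons_neg_pi_fst hmean]
end
end
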